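/- Let ε ∈ [0,1] and let (X_n)_{n≥0} be a stochastic process with values in A = {0,1,2} compatible with (τ_qua, p_qua). Then for every n ≥ 2 with P(X_n = 2) > 0: P(X_{n+1} = 2 | X_n = 2) = 0, P(X_{n+2} = 0 | X_n = 2) = 1, P(X_{n+3} = 2 | X_n = 2) = 0, and P(X_{n+4} = 2 | X_n = 2) = 1. -/

import Mathlib

open MeasureTheory

/-- The quaternary context tree τ_qua = {000, 100, 200, 10, 20, 01, 21, 2}, where the
string "01" denotes the list [0, 1]. -/
def tauQua : Finset (List (Fin 3)) :=
  {[0,0,0], [1,0,0], [2,0,0], [1,0], [2,0], [0,1], [2,1], [2]}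

/-- The family of transition probabilities p_qua of the Quaternary chain:
p(0|2) = ε, p(1|2) = 1−ε; p(0|21) = 1; p(0|20) = 1; p(0|10) = ε, p(1|10) = 1−ε;
p(2|01) = 1; p(0|200) = ε, p(1|200) = 1−ε; p(2|100) = 1; p(2|000) = 1
(all unlisted entries are 0). -/
noncomputable def pQua (ε : ℝ) (w : List (Fin 3)) (a : Fin 3) : ℝ :=
  if w = [2] then (if a = 0 then ε else if a = 1 then 1 - ε else 0)
  else if w = [2,1] then (if a = 0 then 1 else 0)
  else if w = [2,0] then (if a = 0 then 1 else 0)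
  else if w = [1,0] then (if a = 0 then ε else if a = 1 then 1 - ε else 0)
  else if w = [0,1] then (if a = 2 then 1 else 0)
  else if w = [2,0,0] then (if a = 0 then ε else if a = 1 then 1 - ε else 0)
  else if w = [1,0,0] then (if a = 2 then 1 else 0)
  else if w = [0,0,0] then (if a = 2 then 1 else 0)
  else 0

/-- A stochastic process (X_n) with values in {0,1,2} is compatible with
(τ_qua, p_qua): for every n ≥ 3 and every string x_0⋯x_{n-1} with
P(X_0 = x_0, …, X_{n-1} = x_{n-1}) > 0 and such that the context c(x_0⋯x_{n-1}) is
defined (i.e. the last two symbols are not (1,1)), one has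
P(X_n = a | X_0 = x_0, …, X_{n-1} = x_{n-1}) = p_qua(a | c(x_0⋯x_{n-1})) for all a. -/
def CompatibleQua {Ω : Type*} [MeasurableSpace Ω] (μ : Measure Ω)
    (X : ℕ → Ω → Fin 3) (ε : ℝ) (c : List (Fin 3) → List (Fin 3)) : Prop :=
  ∀ n : ℕ, 3 ≤ n → ∀ x : ℕ → Fin 3,
    ¬ ([1,1] <:+ (List.range n).map x) →
    0 < μ {ω | ∀ i < n, X i ω = x i} →
    ∀ a : Fin 3,
      μ ({ω | X n ω = a} ∩ {ω | ∀ i < n, X i ω = x i}) =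
        ENNReal.ofReal (pQua ε (c ((List.range n).map x)) a) *
          μ {ω | ∀ i < n, X i ω = x i}

/-! ### Auxiliary lemmas -/

lemma suffix_of_append' {α : Type*} (s t u : List α) (h : s <:+ u ++ t)
    (hl : s.length ≤ t.length) : s <:+ t := by
  have ht : t <:+ u ++ t := List.suffix_append u t
  rw [← List.reverse_prefix] at h ht ⊢
  exact List.prefix_of_prefix_length_le h ht (by simpa using hl)

lemma not11_append (u t : List (Fin 3)) (h2 : 2 ≤ t.length) (h11 : ¬ [1,1] <:+ t) :
    ¬ [1,1] <:+ (u ++ t) :=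
  fun h => h11 (suffix_of_append' _ _ _ h (by simpa using h2))

lemma ctx_eq (c : List (Fin 3) → List (Fin 3))
    (hc : ∀ v : List (Fin 3), 3 ≤ v.length → ¬ ([1,1] <:+ v) →
      c v ∈ tauQua ∧ c v <:+ v)
    (u t : List (Fin 3)) (s : List (Fin 3)) (ht : t.length = 3)
    (h11 : ¬ [1,1] <:+ t)
    (huniq : ∀ s' ∈ tauQua, s' <:+ t → s' = s) :
    c (u ++ t) = s := by
  have hlen : 3 ≤ (u ++ t).length := by rw [List.length_append, ht]; omega
  have h11' : ¬ [1,1] <:+ (u ++ t) := not11_append u t (by omega) h11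
  obtain ⟨hmem, hsuf⟩ := hc (u ++ t) hlen h11'
  have hl : (c (u ++ t)).length ≤ 3 := by
    have hm := hmem
    simp only [tauQua, Finset.mem_insert, Finset.mem_singleton] at hm
    rcases hm with h|h|h|h|h|h|h|h <;> simp [h]
  exact huniq _ hmem (suffix_of_append' _ _ _ hsuf (by omega))

lemma range_map_split (x : ℕ → Fin 3) (k : ℕ) :
    (List.range (k+3)).map x = (List.range k).map x ++ [x k, x (k+1), x (k+2)] := by
  have h1 : List.range (k+3) = List.range (k+2) ++ [k+2] := List.range_succ (n := k+2)
  have h2 : List.range (k+2) = List.range (k+1) ++ [k+1] := List.range_succ (n := k+1)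
  have h3 : List.range (k+1) = List.range k ++ [k] := List.range_succ (n := k)
  rw [h1, h2, h3]; simp

lemma null_step {Ω : Type*} [MeasurableSpace Ω] (μ : Measure Ω)
    (X : ℕ → Ω → Fin 3) (ε : ℝ) (c : List (Fin 3) → List (Fin 3))
    (hcompat : CompatibleQua μ X ε c) (m : ℕ) (hm : 3 ≤ m) (x : ℕ → Fin 3) (a : Fin 3)
    (h11 : ¬ [1,1] <:+ (List.range m).map x)
    (hp : pQua ε (c ((List.range m).map x)) a = 0) :
    μ ({ω | X m ω = a} ∩ {ω | ∀ i < m, X i ω = x i}) = 0 := by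
  rcases eq_or_lt_of_le (show (0 : ENNReal) ≤ μ {ω | ∀ i < m, X i ω = x i} by simp) with h0 | hpos
  · exact measure_mono_null Set.inter_subset_right h0.symm
  · rw [hcompat m hm x h11 hpos a, hp, ENNReal.ofReal_zero, zero_mul]

lemma null_tail {Ω : Type*} [MeasurableSpace Ω] (μ : Measure Ω)
    (X : ℕ → Ω → Fin 3) (ε : ℝ) (c : List (Fin 3) → List (Fin 3))
    (hc : ∀ v : List (Fin 3), 3 ≤ v.length → ¬ ([1,1] <:+ v) →
      c v ∈ tauQua ∧ c v <:+ v)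
    (hcompat : CompatibleQua μ X ε c) (k : ℕ) (x : ℕ → Fin 3) (a : Fin 3)
    (p q r : Fin 3) (hp0 : x k = p) (hq0 : x (k+1) = q) (hr0 : x (k+2) = r)
    (s : List (Fin 3))
    (h11 : ¬ ([1,1] : List (Fin 3)) <:+ [p,q,r])
    (huniq : ∀ s' ∈ tauQua, s' <:+ [p,q,r] → s' = s)
    (hps : pQua ε s a = 0) :
    μ ({ω | X (k+3) ω = a} ∩ {ω | ∀ i < k+3, X i ω = x i}) = 0 := by
  have hv : (List.range (k+3)).map x = (List.range k).map x ++ [p,q,r] := by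
    rw [range_map_split, hp0, hq0, hr0]
  apply null_step μ X ε c hcompat (k+3) (by omega) x a
  · rw [hv]; exact not11_append _ _ (by norm_num) h11
  · rw [hv, ctx_eq c hc _ [p,q,r] s (by simp) h11 huniq, hps]

lemma cover_null {Ω : Type*} [MeasurableSpace Ω] (μ : Measure Ω) (X : ℕ → Ω → Fin 3)
    (m : ℕ) (S : Set Ω)
    (hS : ∀ ω ∈ S, μ (S ∩ {ω' | ∀ i < m, X i ω' = X i ω}) = 0) : μ S = 0 := by
  classical
  have hcov : S ⊆ ⋃ y : Fin m → Fin 3,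
      if h : ∃ ω'' ∈ S, ∀ i : Fin m, X i ω'' = y i then
        S ∩ {ω' | ∀ i < m, X i ω' = X i h.choose} else ∅ := by
    intro ω hω
    refine Set.mem_iUnion.mpr ⟨fun i => X i ω, ?_⟩
    have hex : ∃ ω'' ∈ S, ∀ i : Fin m, X (i : ℕ) ω'' = X (i : ℕ) ω := ⟨ω, hω, fun _ => rfl⟩
    rw [dif_pos hex]
    exact ⟨hω, fun i hi => (hex.choose_spec.2 ⟨i, hi⟩).symm⟩
  refine measure_mono_null hcov (measure_iUnion_null fun y => ?_)
  by_cases h : ∃ ω'' ∈ S, ∀ i : Fin m, X i ω'' = y i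
  · rw [dif_pos h]; exact hS h.choose h.choose_spec.1
  · rw [dif_neg h]; simp

/-- for ε ∈ [0,1] and (X_n) compatible with (τ_qua, p_qua), for every
n ≥ 2 with P(X_n = 2) > 0: P(X_{n+1} = 2 | X_n = 2) = 0, P(X_{n+2} = 0 | X_n = 2) = 1,
P(X_{n+3} = 2 | X_n = 2) = 0 and P(X_{n+4} = 2 | X_n = 2) = 1. -/
theorem stmt6 {Ω : Type*} [MeasurableSpace Ω] (μ : Measure Ω) [IsProbabilityMeasure μ]
    (X : ℕ → Ω → Fin 3) (hX : ∀ n, Measurable (X n))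
    (ε : ℝ) (hε0 : 0 ≤ ε) (hε1 : ε ≤ 1)
    (c : List (Fin 3) → List (Fin 3))
    (hc : ∀ v : List (Fin 3), 3 ≤ v.length → ¬ ([1,1] <:+ v) →
      c v ∈ tauQua ∧ c v <:+ v)
    (hcompat : CompatibleQua μ X ε c)
    (n : ℕ) (hn : 2 ≤ n) (hpos : 0 < μ {ω | X n ω = 2}) :
    μ ({ω | X (n+1) ω = 2} ∩ {ω | X n ω = 2}) = 0 ∧
    μ ({ω | X (n+2) ω = 0} ∩ {ω | X n ω = 2}) = μ {ω | X n ω = 2} ∧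
    μ ({ω | X (n+3) ω = 2} ∩ {ω | X n ω = 2}) = 0 ∧
    μ ({ω | X (n+4) ω = 2} ∩ {ω | X n ω = 2}) = μ {ω | X n ω = 2} := by
  obtain ⟨k, rfl⟩ : ∃ k, n = k + 2 := ⟨n - 2, by omega⟩
  have cases3 : ∀ z : Fin 3, z = 0 ∨ z = 1 ∨ z = 2 := by decide
  set B : Set Ω := {ω | X (k+2) ω = 2} with hB
  -- Part 1
  have h1 : μ ({ω | X (k+3) ω = 2} ∩ B) = 0 := by
    apply cover_null μ X (k+3)
    intro ω hω
    have hx2 : X (k+2) ω = (2 : Fin 3) := hω.2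
    refine measure_mono_null (Set.inter_subset_inter_left _ Set.inter_subset_left) ?_
    rcases cases3 (X k ω) with hp|hp|hp <;> rcases cases3 (X (k+1) ω) with hq|hq|hq <;>
      exact null_tail μ X ε c hc hcompat k (fun i => X i ω) 2 _ _ _ hp hq hx2 [2]
        (by decide) (by decide) (by simp [pQua])
  -- Part 2 (null part)
  have h2 : ∀ a : Fin 3, a ≠ 0 → μ ({ω | X (k+4) ω = a} ∩ B) = 0 := by
    intro a ha
    apply cover_null μ X (k+4)
    intro ω hω
    have hx2 : X (k+2) ω = (2 : Fin 3) := hω.2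
    rcases cases3 (X (k+3) ω) with h3|h3|h3
    · refine measure_mono_null (Set.inter_subset_inter_left _ Set.inter_subset_left) ?_
      rcases cases3 (X (k+1) ω) with hq|hq|hq <;>
        exact null_tail μ X ε c hc hcompat (k+1) (fun i => X i ω) a _ _ _ hq hx2 h3 [2,0]
          (by decide) (by decide) (by simp [pQua, ha])
    · refine measure_mono_null (Set.inter_subset_inter_left _ Set.inter_subset_left) ?_
      rcases cases3 (X (k+1) ω) with hq|hq|hq <;>
        exact null_tail μ X ε c hc hcompat (k+1) (fun i => X i ω) a _ _ _ hq hx2 h3 [2,1]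
          (by decide) (by decide) (by simp [pQua, ha])
    · refine measure_mono_null (fun ω' hω' => ?_) h1
      exact ⟨show X (k+3) ω' = 2 by rw [hω'.2 (k+3) (by omega)]; exact h3,
             show X (k+2) ω' = 2 by rw [hω'.2 (k+2) (by omega)]; exact hx2⟩
  -- Part 3
  have h3null : μ ({ω | X (k+5) ω = 2} ∩ B) = 0 := by
    apply cover_null μ X (k+5)
    intro ω hω
    have hx2 : X (k+2) ω = (2 : Fin 3) := hω.2
    rcases cases3 (X (k+4) ω) with h4|h4|h4
    · rcases cases3 (X (k+3) ω) with h3|h3|h3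
      · refine measure_mono_null (Set.inter_subset_inter_left _ Set.inter_subset_left) ?_
        exact null_tail μ X ε c hc hcompat (k+2) (fun i => X i ω) 2 _ _ _ hx2 h3 h4 [2,0,0]
          (by decide) (by decide) (by simp [pQua])
      · refine measure_mono_null (Set.inter_subset_inter_left _ Set.inter_subset_left) ?_
        exact null_tail μ X ε c hc hcompat (k+2) (fun i => X i ω) 2 _ _ _ hx2 h3 h4 [1,0]
          (by decide) (by decide) (by simp [pQua])
      · refine measure_mono_null (fun ω' hω' => ?_) h1
        exact ⟨show X (k+3) ω' = 2 by rw [hω'.2 (k+3) (by omega)]; exact h3,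
               show X (k+2) ω' = 2 by rw [hω'.2 (k+2) (by omega)]; exact hx2⟩
    · refine measure_mono_null (fun ω' hω' => ?_) (h2 1 (by decide))
      exact ⟨show X (k+4) ω' = 1 by rw [hω'.2 (k+4) (by omega)]; exact h4,
             show X (k+2) ω' = 2 by rw [hω'.2 (k+2) (by omega)]; exact hx2⟩
    · refine measure_mono_null (fun ω' hω' => ?_) (h2 2 (by decide))
      exact ⟨show X (k+4) ω' = 2 by rw [hω'.2 (k+4) (by omega)]; exact h4,
             show X (k+2) ω' = 2 by rw [hω'.2 (k+2) (by omega)]; exact hx2⟩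
  -- Part 4 (null part)
  have h4null : ∀ a : Fin 3, a ≠ 2 → μ ({ω | X (k+6) ω = a} ∩ B) = 0 := by
    intro a ha
    apply cover_null μ X (k+6)
    intro ω hω
    have hx2 : X (k+2) ω = (2 : Fin 3) := hω.2
    rcases cases3 (X (k+3) ω) with h3|h3|h3
    · rcases cases3 (X (k+4) ω) with h4|h4|h4
      · rcases cases3 (X (k+5) ω) with h5|h5|h5
        · refine measure_mono_null (Set.inter_subset_inter_left _ Set.inter_subset_left) ?_
          exact null_tail μ X ε c hc hcompat (k+3) (fun i => X i ω) a _ _ _ h3 h4 h5 [0,0,0]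
            (by decide) (by decide) (by simp [pQua, ha])
        · refine measure_mono_null (Set.inter_subset_inter_left _ Set.inter_subset_left) ?_
          exact null_tail μ X ε c hc hcompat (k+3) (fun i => X i ω) a _ _ _ h3 h4 h5 [0,1]
            (by decide) (by decide) (by simp [pQua, ha])
        · refine measure_mono_null (fun ω' hω' => ?_) h3null
          exact ⟨show X (k+5) ω' = 2 by rw [hω'.2 (k+5) (by omega)]; exact h5,
                 show X (k+2) ω' = 2 by rw [hω'.2 (k+2) (by omega)]; exact hx2⟩
      · refine measure_mono_null (fun ω' hω' => ?_) (h2 1 (by decide))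
        exact ⟨show X (k+4) ω' = 1 by rw [hω'.2 (k+4) (by omega)]; exact h4,
               show X (k+2) ω' = 2 by rw [hω'.2 (k+2) (by omega)]; exact hx2⟩
      · refine measure_mono_null (fun ω' hω' => ?_) (h2 2 (by decide))
        exact ⟨show X (k+4) ω' = 2 by rw [hω'.2 (k+4) (by omega)]; exact h4,
               show X (k+2) ω' = 2 by rw [hω'.2 (k+2) (by omega)]; exact hx2⟩
    · rcases cases3 (X (k+4) ω) with h4|h4|h4
      · rcases cases3 (X (k+5) ω) with h5|h5|h5
        · refine measure_mono_null (Set.inter_subset_inter_left _ Set.inter_subset_left) ?_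
          exact null_tail μ X ε c hc hcompat (k+3) (fun i => X i ω) a _ _ _ h3 h4 h5 [1,0,0]
            (by decide) (by decide) (by simp [pQua, ha])
        · refine measure_mono_null (Set.inter_subset_inter_left _ Set.inter_subset_left) ?_
          exact null_tail μ X ε c hc hcompat (k+3) (fun i => X i ω) a _ _ _ h3 h4 h5 [0,1]
            (by decide) (by decide) (by simp [pQua, ha])
        · refine measure_mono_null (fun ω' hω' => ?_) h3null
          exact ⟨show X (k+5) ω' = 2 by rw [hω'.2 (k+5) (by omega)]; exact h5,
                 show X (k+2) ω' = 2 by rw [hω'.2 (k+2) (by omega)]; exact hx2⟩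
      · refine measure_mono_null (fun ω' hω' => ?_) (h2 1 (by decide))
        exact ⟨show X (k+4) ω' = 1 by rw [hω'.2 (k+4) (by omega)]; exact h4,
               show X (k+2) ω' = 2 by rw [hω'.2 (k+2) (by omega)]; exact hx2⟩
      · refine measure_mono_null (fun ω' hω' => ?_) (h2 2 (by decide))
        exact ⟨show X (k+4) ω' = 2 by rw [hω'.2 (k+4) (by omega)]; exact h4,
               show X (k+2) ω' = 2 by rw [hω'.2 (k+2) (by omega)]; exact hx2⟩
    · refine measure_mono_null (fun ω' hω' => ?_) h1
      exact ⟨show X (k+3) ω' = 2 by rw [hω'.2 (k+3) (by omega)]; exact h3,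
             show X (k+2) ω' = 2 by rw [hω'.2 (k+2) (by omega)]; exact hx2⟩
  -- assemble
  have g2 : μ ({ω | X (k+4) ω = 0} ∩ B) = μ B := by
    refine le_antisymm (measure_mono Set.inter_subset_right) ?_
    have hsub : B ⊆ ({ω | X (k+4) ω = 0} ∩ B) ∪
        (({ω | X (k+4) ω = 1} ∩ B) ∪ ({ω | X (k+4) ω = 2} ∩ B)) := by
      intro ω hω
      rcases cases3 (X (k+4) ω) with h|h|h
      · exact Or.inl ⟨h, hω⟩
      · exact Or.inr (Or.inl ⟨h, hω⟩)
      · exact Or.inr (Or.inr ⟨h, hω⟩)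
    calc μ B ≤ _ := measure_mono hsub
      _ ≤ μ ({ω | X (k+4) ω = 0} ∩ B) +
          μ (({ω | X (k+4) ω = 1} ∩ B) ∪ ({ω | X (k+4) ω = 2} ∩ B)) := measure_union_le _ _
      _ ≤ μ ({ω | X (k+4) ω = 0} ∩ B) +
          (μ ({ω | X (k+4) ω = 1} ∩ B) + μ ({ω | X (k+4) ω = 2} ∩ B)) := by
            gcongr; exact measure_union_le _ _
      _ = μ ({ω | X (k+4) ω = 0} ∩ B) := by
            rw [h2 1 (by decide), h2 2 (by decide), add_zero, add_zero]
  have g4 : μ ({ω | X (k+6) ω = 2} ∩ B) = μ B := by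
    refine le_antisymm (measure_mono Set.inter_subset_right) ?_
    have hsub : B ⊆ ({ω | X (k+6) ω = 2} ∩ B) ∪
        (({ω | X (k+6) ω = 0} ∩ B) ∪ ({ω | X (k+6) ω = 1} ∩ B)) := by
      intro ω hω
      rcases cases3 (X (k+6) ω) with h|h|h
      · exact Or.inr (Or.inl ⟨h, hω⟩)
      · exact Or.inr (Or.inr ⟨h, hω⟩)
      · exact Or.inl ⟨h, hω⟩
    calc μ B ≤ _ := measure_mono hsub
      _ ≤ μ ({ω | X (k+6) ω = 2} ∩ B) +
          μ (({ω | X (k+6) ω = 0} ∩ B) ∪ ({ω | X (k+6) ω = 1} ∩ B)) := measure_union_le _ _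
      _ ≤ μ ({ω | X (k+6) ω = 2} ∩ B) +
          (μ ({ω | X (k+6) ω = 0} ∩ B) + μ ({ω | X (k+6) ω = 1} ∩ B)) := by
            gcongr; exact measure_union_le _ _
      _ = μ ({ω | X (k+6) ω = 2} ∩ B) := by
            rw [h4null 0 (by decide), h4null 1 (by decide), add_zero, add_zero]
  exact ⟨h1, g2, h3null, g4⟩
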